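/- For all x in (0,1) and p in (-∞,-1] ∪ [0,∞), both u₁(x,p) = (2p + (3+p)x)(3p+1+2x) and u₂(x,p) = 2(p+3)x³ + 8px² + 2p(3p+1)x + 3(p+1)² are strictly positive. -/
import Mathlib


theorem stmt2 (x p : ℝ) (hx : x ∈ Set.Ioo (0:ℝ) 1) (hp : p ≤ -1 ∨ 0 ≤ p) :
    0 < (2*p + (3+p)*x) * (3*p + 1 + 2*x) ∧
    0 < 2*(p+3)*x^3 + 8*p*x^2 + 2*p*(3*p+1)*x + 3*(p+1)^2 := by
  obtain ⟨hx0, hx1⟩ := hx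
  rcases hp with hp | hp
  · constructor
    · have hA : 2*p + (3+p)*x < 0 := by nlinarith [mul_pos hx0 (sub_pos.mpr hx1)]
      have hB : 3*p + 1 + 2*x < 0 := by linarith
      exact mul_pos_of_neg_of_neg hA hB
    · nlinarith [mul_pos (mul_pos hx0 (sub_pos.mpr hx1)) (sub_pos.mpr hx1), sq_nonneg (p+1), mul_nonneg (sq_nonneg (p+1)) hx0.le, mul_nonneg (sq_nonneg (p+1)) (sub_pos.mpr hx1).le, mul_nonneg (mul_nonneg (sq_nonneg (p+1)) hx0.le) (sub_pos.mpr hx1).le, mul_pos hx0 (sub_pos.mpr hx1)]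
  · constructor
    · have hA : 0 < 2*p + (3+p)*x := by nlinarith
      have hB : 0 < 3*p + 1 + 2*x := by linarith
      exact mul_pos hA hB
    · nlinarith [mul_pos (mul_pos hx0 hx0) hx0, mul_nonneg (mul_nonneg hp hx0.le) hx0.le, mul_nonneg hp hx0.le, sq_nonneg (p+1), mul_pos hx0 hx0, mul_nonneg (mul_nonneg hp hp) hx0.le]
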